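/- Let $L_1,\dots,L_{n+1} : \mathbb{C} \to P^n(\mathbb{C})$ be holomorphic curves with reduced representations, and suppose there is $\delta > 0$ such that for all $\zeta \in \mathbb{C}$, $\frac{|\det(L_1(\zeta),\dots,L_{n+1}(\zeta))|}{\|L_1(\zeta)\| \cdots \|L_{n+1}(\zeta)\|} \geq \delta^n$ (in particular the determinant is nowhere vanishing). Then $\sum_{i=1}^{n+1} T_{L_i}(r) = O(1)$, i.e. each $L_i$ is constant. -/

import Mathlib

/-! Let `A ζ` be the matrix with rows `L k ζ` and `v ζ` the `i`-th column of `(A ζ)⁻¹`. By Cramer's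
rule `v ζ` is a column of cofactors divided by the determinant, and the cofactors of row `i` are
bounded by `(n+1)! ∏_{k ≠ i} ‖L k ζ‖`; together with the lower bound on the determinant this makes
every entry of the outer product `L i ζ ⊗ v ζ` bounded by `(n+1)!/δⁿ`. These entries are entire,
so by Liouville the rank-one matrix `L i ζ ⊗ v ζ` does not depend on `ζ`. Its trace is
`L i ζ ⬝ v ζ = 1`, so it is nonzero, and its column space, the line through `L i ζ`, is fixed. -/

open Matrix
open scoped Nat

section Differentiability

variable {𝕜 E ι : Type*} [NontriviallyNormedField 𝕜] [NormedAddCommGroup E] [NormedSpace 𝕜 E]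
  [Fintype ι] [DecidableEq ι] {A : E → Matrix ι ι 𝕜}

theorem differentiable_matrix_det (hA : ∀ i j, Differentiable 𝕜 fun x => A x i j) :
    Differentiable 𝕜 fun x => (A x).det := by
  simp only [det_apply']
  fun_prop

theorem differentiable_matrix_adjugate_apply (hA : ∀ i j, Differentiable 𝕜 fun x => A x i j)
    (i j : ι) : Differentiable 𝕜 fun x => (A x).adjugate i j := by
  simp only [adjugate_apply]
  refine differentiable_matrix_det fun k l => ?_
  simp only [updateRow_apply]
  split_ifs
  · exact differentiable_const _
  · exact hA k l

theorem differentiable_matrix_inv_apply (hA : ∀ i j, Differentiable 𝕜 fun x => A x i j)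
    (hdet : ∀ x, (A x).det ≠ 0) (i j : ι) : Differentiable 𝕜 fun x => (A x)⁻¹ i j := by
  simp only [Matrix.inv_def, Ring.inverse_eq_inv', Matrix.smul_apply, smul_eq_mul]
  exact ((differentiable_matrix_det hA).inv hdet).mul (differentiable_matrix_adjugate_apply hA i j)

end Differentiability

theorem Matrix.norm_det_le_factorial_mul_prod {R ι : Type*} [NormedCommRing R] [NormOneClass R]
    [Fintype ι] [DecidableEq ι] {A : Matrix ι ι R} {b : ι → ℝ} (h : ∀ i j, ‖A i j‖ ≤ b i) :
    ‖A.det‖ ≤ (Fintype.card ι)! * ∏ i, b i :=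
  calc ‖A.det‖ ≤ ∑ σ : Equiv.Perm ι, ‖Equiv.Perm.sign σ • ∏ i, A (σ i) i‖ := by
        rw [det_apply]; exact norm_sum_le _ _
    _ ≤ ∑ σ : Equiv.Perm ι, ∏ i, b (σ i) := by
        gcongr with σ
        rw [norm_units_zsmul]
        exact (Finset.norm_prod_le _ _).trans (by gcongr with i; exact h (σ i) i)
    _ = (Fintype.card ι)! * ∏ i, b i := by
        simp [Equiv.prod_comp, Fintype.card_perm]

theorem Matrix.norm_mul_inv_apply_le {𝕜 ι : Type*} [NormedField 𝕜] [Fintype ι] [DecidableEq ι]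
    {A : Matrix ι ι 𝕜} {b : ι → ℝ} (h : ∀ i j, ‖A i j‖ ≤ b i) (i j m : ι) :
    ‖A i j * A⁻¹ m i‖ ≤ (Fintype.card ι)! * (∏ k, b k) / ‖A.det‖ := by
  have hadj : ‖A.adjugate m i‖ ≤ (Fintype.card ι)! * ∏ k, Function.update b i 1 k := by
    rw [adjugate_apply]
    refine norm_det_le_factorial_mul_prod fun k l => ?_
    rcases eq_or_ne k i with rfl | hk
    · rw [updateRow_self, Function.update_self]
      rcases eq_or_ne l m with rfl | hl
      · simp
      · simp [hl]
    · rw [updateRow_ne hk, Function.update_of_ne hk]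
      exact h k l
  have hbi : 0 ≤ b i := (norm_nonneg _).trans (h i j)
  rw [Finset.prod_update_of_mem (Finset.mem_univ i), one_mul] at hadj
  calc ‖A i j * A⁻¹ m i‖ = ‖A i j‖ * ‖A.adjugate m i‖ / ‖A.det‖ := by
        rw [Matrix.inv_def, Ring.inverse_eq_inv', Matrix.smul_apply, smul_eq_mul, norm_mul, norm_mul,
          norm_inv]
        ring
    _ ≤ b i * ((Fintype.card ι)! * ∏ k ∈ Finset.univ \ {i}, b k) / ‖A.det‖ := by gcongr; exact h i j
    _ = (Fintype.card ι)! * (∏ k, b k) / ‖A.det‖ := by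
        rw [Finset.prod_eq_mul_prod_sdiff_singleton_of_mem (Finset.mem_univ i)]
        ring

theorem Matrix.exists_smul_eq_of_vecMulVec_eq {K ι : Type*} [Field K] [Fintype ι] {x y u w : ι → K}
    (h : vecMulVec x u = vecMulVec y w) (hxu : x ⬝ᵥ u ≠ 0) : ∃ c : K, c ≠ 0 ∧ x = c • y := by
  obtain ⟨m, -, hm⟩ := Finset.exists_ne_zero_of_sum_ne_zero hxu
  have hxu_m : x m * u m = y m * w m := congr_fun (congr_fun h m) m
  have hu : u m ≠ 0 := right_ne_zero_of_mul hm
  have hw : w m ≠ 0 := right_ne_zero_of_mul (hxu_m ▸ hm)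
  refine ⟨w m / u m, div_ne_zero hw hu, funext fun j => ?_⟩
  have hj : x j * u m = y j * w m := congr_fun (congr_fun h j) m
  rw [Pi.smul_apply, smul_eq_mul, div_mul_eq_mul_div, eq_div_iff hu, hj, mul_comm]

theorem exists_smul_row_eq_of_norm_det_ge {ι : Type*} [Fintype ι] [DecidableEq ι]
    {A : ℂ → Matrix ι ι ℂ} (hA : ∀ i j, Differentiable ℂ fun ζ => A ζ i j)
    {b : ℂ → ι → ℝ} (hb : ∀ ζ i j, ‖A ζ i j‖ ≤ b ζ i) {c : ℝ} (hc : 0 < c)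
    (hdet : ∀ ζ, c * ∏ i, b ζ i ≤ ‖(A ζ).det‖) (hdet_ne : ∀ ζ, (A ζ).det ≠ 0)
    (i : ι) (ζ₁ ζ₂ : ℂ) : ∃ t : ℂ, t ≠ 0 ∧ A ζ₁ i = t • A ζ₂ i := by
  set col : ℂ → ι → ℂ := fun ζ m => (A ζ)⁻¹ m i
  have hbounded (j m : ι) (ζ : ℂ) : ‖A ζ i j * col ζ m‖ ≤ (Fintype.card ι)! / c := by
    refine (norm_mul_inv_apply_le (hb ζ) i j m).trans ?_
    rw [div_le_div_iff₀ (norm_pos_iff.2 (hdet_ne ζ)) hc, mul_assoc]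
    gcongr
    linarith [hdet ζ]
  have hconst : vecMulVec (A ζ₁ i) (col ζ₁) = vecMulVec (A ζ₂ i) (col ζ₂) := by
    ext j m
    exact ((hA i j).mul (differentiable_matrix_inv_apply hA hdet_ne m i)).apply_eq_apply_of_bounded
      (isBounded_iff_forall_norm_le.2 ⟨_, Set.forall_mem_range.2 (hbounded j m)⟩) ζ₁ ζ₂
  have hdot : A ζ₁ i ⬝ᵥ col ζ₁ = 1 := by
    simpa [mul_apply'] using
      congr_fun (congr_fun (mul_nonsing_inv (A ζ₁) (hdet_ne ζ₁).isUnit) i) i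
  exact exists_smul_eq_of_vecMulVec_eq hconst (hdot ▸ one_ne_zero)

/-- Key step in Lemma 3.4: if `L 1, …, L (n+1) : ℂ → Pⁿ(ℂ)` are holomorphic curves
given by (reduced) nowhere-vanishing holomorphic representations and there is
`δ > 0` with `|det (L 1 ζ, …, L (n+1) ζ)| ≥ δⁿ ∏ ‖L i ζ‖` for all `ζ` (in
particular the determinant is nowhere vanishing), then each `L i` is constant as a
curve in projective space. -/
theorem stmt12 (n : ℕ) (L : Fin (n + 1) → ℂ → Fin (n + 1) → ℂ)
    (hdiff : ∀ i j, Differentiable ℂ (fun ζ => L i ζ j))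
    (hred : ∀ i ζ, L i ζ ≠ 0)
    (δ : ℝ) (hδ : 0 < δ)
    (hdet : ∀ ζ : ℂ,
      ‖Matrix.det (Matrix.of fun i j => L i ζ j)‖
        ≥ δ ^ n * ∏ i, Real.sqrt (∑ j, (‖L i ζ j‖) ^ 2)) :
    ∀ i, ∀ ζ₁ ζ₂ : ℂ, ∃ lam : ℂ, lam ≠ 0 ∧ L i ζ₁ = lam • L i ζ₂ := by
  have hrow (ζ : ℂ) (k : Fin (n + 1)) : √(∑ j, ‖L k ζ j‖ ^ 2)
      = ‖(WithLp.toLp 2 (L k ζ) : EuclideanSpace ℂ (Fin (n + 1)))‖ :=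
    (EuclideanSpace.norm_eq (WithLp.toLp 2 (L k ζ))).symm
  simp only [hrow] at hdet
  have hdet_ne (ζ : ℂ) : (Matrix.of fun i j => L i ζ j).det ≠ 0 := by
    have hpos : 0 < δ ^ n * ∏ k, ‖(WithLp.toLp 2 (L k ζ) : EuclideanSpace ℂ (Fin (n + 1)))‖ :=
      mul_pos (pow_pos hδ n) (Finset.prod_pos fun k _ => by simpa using hred k ζ)
    exact norm_pos_iff.1 (hpos.trans_le (hdet ζ))
  exact exists_smul_row_eq_of_norm_det_ge (A := fun ζ => Matrix.of fun i j => L i ζ j) hdiff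
    (fun ζ k j => PiLp.norm_apply_le (WithLp.toLp 2 (L k ζ)) j) (pow_pos hδ n) hdet hdet_ne
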